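/- arXiv:2506.01656 — 4 statements merged into one kernel-verified Lean document; each statement's English description precedes it below -/
import Mathlib

section
/- Let $k > 3$, $B > 0$, and let $(A_t)_{t \geq 0}$ satisfy $A_{t+1} = A_t + B A_t^{k-1}$ with $0 < A_0$. Suppose $A_t \leq 1$ for all $t \leq T$. Then for all $t \leq T$ with $1 - B(1+B)^{k-1}(k-2)A_0^{k-2} t > 0$, one has $A_t \leq A_0 / (1 - B(1+B)^{k-1}(k-2)A_0^{k-2} t)^{1/(k-2)}$. -/
/-!
Put `u t = A t ^ (k - 2)`. Since `A t ≤ 1`, one step of the recursion multiplies `u` by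
`(1 + B u) ^ (k - 2) ≤ 1 + (k - 2) B (1 + B) ^ (k - 1) u`, so `u (t + 1) ≤ u t + c u t ^ 2`.
For such a sequence `1 / u` decreases by at most `c` per step, which gives
`u t (1 - c u 0 t) ≤ u 0`; taking `(k - 2)`-th roots is the claim.
-/

theorem inv_sub_le_inv_add_mul_sq {u c : ℝ} (hu : 0 < u) (hw : 0 < u + c * u ^ 2) :
    u⁻¹ - c ≤ (u + c * u ^ 2)⁻¹ := by
  have h1 : 0 < 1 + c * u := by nlinarith
  calc u⁻¹ - c = (1 - c * u) / u := by field_simp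
    _ ≤ 1 / (1 + c * u) / u := by
      gcongr
      rw [le_div_iff₀ h1]
      nlinarith [sq_nonneg (c * u)]
    _ = (u + c * u ^ 2)⁻¹ := by field_simp

theorem mul_one_sub_le_of_le_add_mul_sq {u : ℕ → ℝ} {c : ℝ} {T : ℕ} (hu : ∀ t, 0 < u t)
    (hstep : ∀ t < T, u (t + 1) ≤ u t + c * u t ^ 2) :
    ∀ t ≤ T, u t * (1 - c * u 0 * t) ≤ u 0 := by
  have hinv : ∀ t ≤ T, (u 0)⁻¹ - c * t ≤ (u t)⁻¹ := by
    intro t ht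
    induction t with
    | zero => simp
    | succ t ih =>
      have hw := (hu (t + 1)).trans_le (hstep t ht)
      calc (u 0)⁻¹ - c * ↑(t + 1) = ((u 0)⁻¹ - c * t) - c := by push_cast; ring
        _ ≤ (u t)⁻¹ - c := by linarith [ih (by omega)]
        _ ≤ (u t + c * u t ^ 2)⁻¹ := inv_sub_le_inv_add_mul_sq (hu t) hw
        _ ≤ (u (t + 1))⁻¹ := inv_anti₀ (hu _) (hstep t ht)
  intro t ht
  have hu0t : 0 ≤ u 0 * u t := (mul_pos (hu 0) (hu t)).le
  have hu0 := (hu 0).ne'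
  have hut := (hu t).ne'
  calc u t * (1 - c * u 0 * t) = u 0 * u t * ((u 0)⁻¹ - c * t) := by field_simp
    _ ≤ u 0 * u t * (u t)⁻¹ := mul_le_mul_of_nonneg_left (hinv t ht) hu0t
    _ = u 0 := by field_simp

theorem pow_mul_one_add_mul_pow_le {a B : ℝ} (ha : 0 ≤ a) (ha1 : a ≤ 1) (hB : 0 ≤ B) (m : ℕ) :
    (a * (1 + B * a ^ m)) ^ m ≤ a ^ m + B * (1 + B) ^ (m + 1) * m * (a ^ m) ^ 2 := by
  set x := B * a ^ m
  have hx : 0 ≤ x := by positivity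
  have hxB : x ≤ B := mul_le_of_le_one_right hB (pow_le_one₀ ha ha1)
  have hpow : (1 + x) ^ m ≤ 1 + x * m * (1 + B) ^ (m + 1) := by
    have h := (le_abs_self _).trans (abs_pow_sub_pow_le (1 + x) 1 m)
    rw [add_sub_cancel_left, abs_of_nonneg hx, abs_of_nonneg (by linarith), abs_one,
      max_eq_left (by linarith), one_pow] at h
    have hmono : (1 + x) ^ (m - 1) ≤ (1 + B) ^ (m + 1) :=
      (pow_le_pow_left₀ (by linarith) (by linarith) _).trans
        (pow_le_pow_right₀ (by linarith) (by omega))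
    nlinarith [mul_le_mul_of_nonneg_left hmono (by positivity : 0 ≤ x * m)]
  calc (a * (1 + x)) ^ m = a ^ m * (1 + x) ^ m := mul_pow _ _ _
    _ ≤ a ^ m * (1 + x * m * (1 + B) ^ (m + 1)) := by gcongr
    _ = a ^ m + B * (1 + B) ^ (m + 1) * m * (a ^ m) ^ 2 := by ring

theorem le_div_rpow_one_div_of_pow_mul_le {x y D : ℝ} {m : ℕ} (hx : 0 ≤ x) (hy : 0 ≤ y)
    (hD : 0 < D) (hm : m ≠ 0) (h : x ^ m * D ≤ y ^ m) : x ≤ y / D ^ ((1 : ℝ) / m) := by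
  have hm' : (0 : ℝ) < m := by positivity
  rw [le_div_iff₀ (by positivity), ← Real.rpow_le_rpow_iff (by positivity) hy hm',
    Real.mul_rpow hx (by positivity), ← Real.rpow_mul hD.le, one_div_mul_cancel hm'.ne',
    Real.rpow_one]
  exact_mod_cast h

/-- Discrete Bihari-LaSalle / Gronwall inequality (upper bound). -/
theorem bihari_lasalle_upper (k : ℕ) (hk : 3 < k) (B : ℝ) (hB : 0 < B)
    (A : ℕ → ℝ) (hA0 : 0 < A 0)
    (hrec : ∀ t : ℕ, A (t + 1) = A t + B * A t ^ (k - 1))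
    (T : ℕ) (hbd : ∀ t ≤ T, A t ≤ 1) :
    ∀ t ≤ T, 0 < 1 - B * (1 + B) ^ (k - 1) * ((k : ℝ) - 2) * A 0 ^ (k - 2) * t →
      A t ≤ A 0 / (1 - B * (1 + B) ^ (k - 1) * ((k : ℝ) - 2) * A 0 ^ (k - 2) * t)
        ^ ((1 : ℝ) / ((k : ℝ) - 2)) := by
  obtain ⟨m, rfl⟩ : ∃ m, k = m + 2 := ⟨k - 2, by omega⟩
  have hm : m ≠ 0 := by omega
  simp only [Nat.add_sub_cancel, show m + 2 - 1 = m + 1 by omega, Nat.cast_add,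
    Nat.cast_ofNat, add_sub_cancel_right]
  have hApos : ∀ t, 0 < A t := fun t => by
    induction t with
    | zero => exact hA0
    | succ t ih => rw [hrec]; positivity
  have hstep : ∀ t < T, A (t + 1) ^ m ≤ A t ^ m + B * (1 + B) ^ (m + 1) * m * (A t ^ m) ^ 2 := by
    intro t ht
    rw [hrec, show m + 2 - 1 = m + 1 by omega,
      show A t + B * A t ^ (m + 1) = A t * (1 + B * A t ^ m) by ring]
    exact pow_mul_one_add_mul_pow_le (hApos t).le (hbd t ht.le) hB.le m
  intro t ht hpos
  have hbihari := mul_one_sub_le_of_le_add_mul_sq (u := fun t => A t ^ m)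
    (fun t => pow_pos (hApos t) m) hstep t ht
  exact le_div_rpow_one_div_of_pow_mul_le (hApos t).le hA0.le hpos hm hbihari
end

section
/- Let $k > 3$, $B > 0$, and $0 < \lambda < (1/(1+B))^{(k-1)/(k-2)}$. Consider two sequences $A_{t+1} = A_t + B A_t^{k-1}$ with $A_0 = B_0 > 0$, and $\tilde{A}_{t+1} = \tilde{A}_t + B \tilde{A}_t^{k-1}$ with $\tilde{A}_0 = \lambda B_0$. Set $t_1 = B^{-1}(k-2)^{-1} B_0^{-(k-2)}$. If $\tilde{A}_t \leq 1$ for all $t \leq t_1$, then $\tilde{A}_{t_1} \leq \tilde{A}_0 / (1 - (1+B)^{k-1}\lambda^{k-2})^{1/(k-2)}$. -/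
/-!
Write `m = k - 2`. Along `x_{t+1} = x_t + B x_t^{m+1} = x_t (1 + B x_t^m)`, Bernoulli's
inequality `(1 + u)^{-m} ≥ 1 - m u` shows that `x_t^{-m}` drops by at most `m B` per step: this
is the discrete lower Bihari–LaSalle bound. Up to time `t₁ ≤ (m B B₀^m)⁻¹` the quantity
`Ã_t^{-m}` therefore loses at most `B₀^{-m} = λ^m Ã₀^{-m} ≤ (1 + B)^{k-1} λ^m Ã₀^{-m}`, and the
condition on `λ` keeps what is left positive.
-/

lemma one_sub_mul_le_inv_one_add_pow {x : ℝ} (hx : 0 ≤ x) (m : ℕ) :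
    1 - m * x ≤ ((1 + x)⁻¹) ^ m := by
  have hx1 : 0 < 1 + x := by linarith
  have hinv : (1 + x)⁻¹ = 1 + -(x / (1 + x)) := by field_simp; ring
  have hfrac : x / (1 + x) ≤ x := div_le_self hx (by linarith)
  have hfrac' : x / (1 + x) ≤ 1 := (div_le_one hx1).2 (by linarith)
  calc 1 - m * x ≤ 1 + m * -(x / (1 + x)) := by nlinarith [(Nat.cast_nonneg m : (0 : ℝ) ≤ m)]
    _ ≤ ((1 + x)⁻¹) ^ m := hinv ▸ one_add_mul_le_pow (by linarith) m

lemma inv_pow_sub_le_inv_pow_add_mul_pow {a B : ℝ} (ha : 0 < a) (hB : 0 ≤ B) (m : ℕ) :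
    (a ^ m)⁻¹ - m * B ≤ ((a + B * a ^ (m + 1)) ^ m)⁻¹ := by
  have hfactor : a + B * a ^ (m + 1) = a * (1 + B * a ^ m) := by ring
  have hcancel : (a ^ m)⁻¹ * (B * a ^ m) = B := by field_simp
  calc (a ^ m)⁻¹ - m * B = (a ^ m)⁻¹ * (1 - m * (B * a ^ m)) := by
        rw [mul_sub, mul_left_comm, hcancel]; ring
    _ ≤ (a ^ m)⁻¹ * ((1 + B * a ^ m)⁻¹) ^ m :=
        mul_le_mul_of_nonneg_left (one_sub_mul_le_inv_one_add_pow (by positivity) m) (by positivity)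
    _ = ((a + B * a ^ (m + 1)) ^ m)⁻¹ := by rw [hfactor, mul_pow, mul_inv, inv_pow]

section Recurrence

variable {x : ℕ → ℝ} {B : ℝ} {m : ℕ}

lemma pos_of_add_mul_pow_recurrence (hB : 0 ≤ B) (hx0 : 0 < x 0)
    (hrec : ∀ t, x (t + 1) = x t + B * x t ^ (m + 1)) (t : ℕ) : 0 < x t := by
  induction t with
  | zero => exact hx0
  | succ t ih => rw [hrec]; positivity

lemma inv_pow_sub_le_of_add_mul_pow_recurrence (hB : 0 ≤ B) (hx0 : 0 < x 0)
    (hrec : ∀ t, x (t + 1) = x t + B * x t ^ (m + 1)) (t : ℕ) :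
    (x 0 ^ m)⁻¹ - t * m * B ≤ (x t ^ m)⁻¹ := by
  induction t with
  | zero => simp
  | succ t ih =>
    have hstep :=
      inv_pow_sub_le_inv_pow_add_mul_pow (pos_of_add_mul_pow_recurrence hB hx0 hrec t) hB m
    rw [← hrec] at hstep
    push_cast
    linarith

end Recurrence

lemma pow_succ_mul_pow_lt_one_of_lt_inv_rpow {a lam : ℝ} (ha : 0 < a) (hlam : 0 ≤ lam)
    {m : ℕ} (hm : m ≠ 0) (h : lam < a⁻¹ ^ (((m + 1 : ℕ) : ℝ) / m)) :
    a ^ (m + 1) * lam ^ m < 1 := by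
  have hm' : (m : ℝ) ≠ 0 := Nat.cast_ne_zero.2 hm
  calc a ^ (m + 1) * lam ^ m < a ^ (m + 1) * (a⁻¹ ^ (((m + 1 : ℕ) : ℝ) / m)) ^ m := by
        gcongr
    _ = 1 := by
      rw [← Real.rpow_mul_natCast (by positivity), div_mul_cancel₀ _ hm', Real.rpow_natCast,
        inv_pow, mul_inv_cancel₀ (by positivity)]

lemma le_div_rpow_of_mul_inv_pow_le {x y c : ℝ} {m : ℕ} (hm : m ≠ 0) (hx : 0 < x) (hy : 0 < y)
    (hc : 0 < c) (h : c * (y ^ m)⁻¹ ≤ (x ^ m)⁻¹) : x ≤ y / c ^ ((m : ℝ)⁻¹) := by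
  rw [le_div_iff₀ (by positivity), ← pow_le_pow_iff_left₀ (by positivity) hy.le hm, mul_pow,
    Real.rpow_inv_natCast_pow hc.le hm]
  rw [← div_eq_mul_inv, ← one_div, div_le_div_iff₀ (by positivity) (by positivity)] at h
  linarith

theorem sequence_separation_general (k : ℕ) (hk : 3 < k) (B : ℝ) (hB : 0 < B)
    (lam B0 : ℝ) (hB0 : 0 < B0)
    (hlam : 0 < lam ∧ lam < ((1 / (1 + B)) : ℝ) ^ (((k : ℝ) - 1) / ((k : ℝ) - 2)))
    (Atil : ℕ → ℝ)
    (hAtil0 : Atil 0 = lam * B0)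
    (hrecAtil : ∀ t : ℕ, Atil (t + 1) = Atil t + B * Atil t ^ (k - 1))
    (t1 : ℕ) (ht1 : (t1 : ℝ) ≤ B⁻¹ * ((k : ℝ) - 2)⁻¹ * (B0 ^ (k - 2))⁻¹) :
    Atil t1 ≤ Atil 0 / (1 - (1 + B) ^ (k - 1) * lam ^ (k - 2)) ^ ((1 : ℝ) / ((k : ℝ) - 2)) := by
  obtain ⟨m, rfl⟩ : ∃ m, k = m + 2 := ⟨k - 2, by omega⟩
  have hm : m ≠ 0 := by omega
  have hcast1 : ((m + 2 : ℕ) : ℝ) - 1 = (m + 1 : ℕ) := by push_cast; ring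
  have hcast2 : ((m + 2 : ℕ) : ℝ) - 2 = m := by push_cast; ring
  simp only [show m + 2 - 1 = m + 1 by omega, Nat.add_sub_cancel, hcast1, hcast2, one_div]
    at hlam hrecAtil ht1 ⊢
  obtain ⟨hlam0, hlam1⟩ := hlam
  have hAtil0_pos : 0 < Atil 0 := hAtil0 ▸ mul_pos hlam0 hB0
  have hD := pow_succ_mul_pow_lt_one_of_lt_inv_rpow (by positivity : 0 < 1 + B) hlam0.le hm hlam1
  have hB0_le : (B0 ^ m)⁻¹ ≤ (1 + B) ^ (m + 1) * lam ^ m * (Atil 0 ^ m)⁻¹ := by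
    rw [hAtil0, mul_pow, mul_inv, ← mul_assoc, mul_assoc _ (lam ^ m),
      mul_inv_cancel₀ (by positivity), mul_one]
    exact le_mul_of_one_le_left (by positivity) (one_le_pow₀ (by linarith))
  have ht1_le : (t1 : ℝ) * m * B ≤ (B0 ^ m)⁻¹ := by
    calc (t1 : ℝ) * m * B = t1 * (m * B) := mul_assoc _ _ _
      _ ≤ B⁻¹ * (m : ℝ)⁻¹ * (B0 ^ m)⁻¹ * (m * B) := by gcongr
      _ = (B0 ^ m)⁻¹ := by field_simp
  apply le_div_rpow_of_mul_inv_pow_le hm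
    (pos_of_add_mul_pow_recurrence hB.le hAtil0_pos hrecAtil t1) hAtil0_pos (sub_pos.2 hD)
  calc (1 - (1 + B) ^ (m + 1) * lam ^ m) * (Atil 0 ^ m)⁻¹ ≤ (Atil 0 ^ m)⁻¹ - t1 * m * B := by
        linarith
    _ ≤ (Atil t1 ^ m)⁻¹ := inv_pow_sub_le_of_add_mul_pow_recurrence hB.le hAtil0_pos hrecAtil t1

/-- Two sequences obeying the same nonlinear recurrence, whose initial values differ by a
factor `λ`, separate: the smaller one stays bounded up to the blow-up time of the larger. -/
theorem sequence_separation (k : ℕ) (hk : 3 < k) (B : ℝ) (hB : 0 < B)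
    (lam B0 : ℝ) (hB0 : 0 < B0)
    (hlam : 0 < lam ∧ lam < ((1 / (1 + B)) : ℝ) ^ (((k : ℝ) - 1) / ((k : ℝ) - 2)))
    (A Atil : ℕ → ℝ)
    (hA0 : A 0 = B0) (hAtil0 : Atil 0 = lam * B0)
    (hrecA : ∀ t : ℕ, A (t + 1) = A t + B * A t ^ (k - 1))
    (hrecAtil : ∀ t : ℕ, Atil (t + 1) = Atil t + B * Atil t ^ (k - 1))
    (t1 : ℕ) (ht1 : (t1 : ℝ) ≤ B⁻¹ * ((k : ℝ) - 2)⁻¹ * (B0 ^ (k - 2))⁻¹)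
    (hbd : ∀ t ≤ t1, Atil t ≤ 1) :
    Atil t1 ≤ Atil 0 / (1 - (1 + B) ^ (k - 1) * lam ^ (k - 2)) ^ ((1 : ℝ) / ((k : ℝ) - 2)) :=
  sequence_separation_general k hk B hB lam B0 hB0 hlam Atil hAtil0 hrecAtil t1 ht1
end

section
/- Let $w \in \mathbb{R}^d$ with $\|w\| = 1$, let $g \in \mathbb{R}^d$, and let $P = I_d - w w^\top$. Define $w^+ = (w - \eta P g)/\|w - \eta P g\|$ for $\eta > 0$ small enough that $w - \eta P g \neq 0$. Then for any unit vector $u \in \mathbb{R}^d$, $u^\top w^+ \geq u^\top w - \eta \, u^\top P g - \frac{|u^\top w| \eta^2}{2}\|Pg\|^2 - \frac{\eta^3}{2}\|Pg\|^3$, provided $\eta \|P g\| \leq 1/2$. -/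
/-!
Write `p = g - ⟪w, g⟫ w` for the projected gradient. Since `p ⟂ w` and `‖w‖ = 1`, Pythagoras gives
`‖w - η p‖ = √(1 + t²)` with `t = η ‖p‖`, hence `1 - t² / 2 ≤ ‖w - η p‖⁻¹ ≤ 1`. Multiplying
`x = ⟪u, w⟫ - η ⟪u, p⟫` by a factor in `[1 - t² / 2, 1]` loses at most `|x| t² / 2`, and
`|x| ≤ |⟪u, w⟫| + t` by Cauchy–Schwarz.
-/

open RealInnerProductSpace

theorem one_sub_half_le_inv_sqrt_one_add {s : ℝ} (hs : 0 ≤ s) : 1 - s / 2 ≤ (√(1 + s))⁻¹ := by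
  calc 1 - s / 2 ≤ (1 + s / 2)⁻¹ := by
        rw [← one_div, le_div_iff₀ (by positivity)]
        nlinarith
    _ ≤ (√(1 + s))⁻¹ := by
        gcongr
        exact Real.sqrt_one_add_le (by linarith)

theorem inv_sqrt_one_add_le_one {s : ℝ} (hs : 0 ≤ s) : (√(1 + s))⁻¹ ≤ 1 :=
  inv_le_one_of_one_le₀ (Real.one_le_sqrt.mpr (by linarith))

theorem sub_abs_mul_le_mul_of_mem_Icc {x c ε : ℝ} (hc : c ∈ Set.Icc (1 - ε) 1) :
    x - |x| * ε ≤ c * x := by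
  obtain ⟨hlo, hhi⟩ := hc
  rcases le_or_gt 0 x with hx | hx
  · rw [abs_of_nonneg hx]; nlinarith
  · rw [abs_of_neg hx]; nlinarith

section InnerProductSpace

variable {E : Type*} [NormedAddCommGroup E] [InnerProductSpace ℝ E]

theorem inner_sub_inner_smul_self_of_norm_eq_one {w : E} (hw : ‖w‖ = 1) (g : E) : ⟪w, g - ⟪w, g⟫ • w⟫ = 0 := by
  simp [inner_sub_right, inner_smul_right, hw]

theorem inner_inv_norm_smul_sub_smul_ge {w p u : E} (hw : ‖w‖ = 1) (hu : ‖u‖ = 1)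
    (hwp : ⟪w, p⟫ = 0) {η : ℝ} (hη : 0 ≤ η) :
    ⟪u, w⟫ - η * ⟪u, p⟫ - |⟪u, w⟫| * η ^ 2 / 2 * ‖p‖ ^ 2 - η ^ 3 / 2 * ‖p‖ ^ 3
      ≤ ⟪u, ‖w - η • p‖⁻¹ • (w - η • p)⟫ := by
  set t := η * ‖p‖
  have hnorm : ‖w - η • p‖ = √(1 + t ^ 2) := by
    rw [norm_sub_eq_sqrt_iff_real_inner_eq_zero.mpr (by rw [inner_smul_right, hwp, mul_zero]),
      norm_smul, hw, Real.norm_of_nonneg hη, one_mul, mul_mul_mul_comm, ← sq, ← sq, ← mul_pow]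
  have hfactor : ‖w - η • p‖⁻¹ ∈ Set.Icc (1 - t ^ 2 / 2) 1 := by
    rw [hnorm]
    exact ⟨one_sub_half_le_inv_sqrt_one_add (by positivity),
      inv_sqrt_one_add_le_one (by positivity)⟩
  have hup : |η * ⟪u, p⟫| ≤ t := by
    rw [abs_mul, abs_of_nonneg hη]
    exact mul_le_mul_of_nonneg_left (by simpa [hu] using abs_real_inner_le_norm u p) hη
  have hx : |⟪u, w⟫ - η * ⟪u, p⟫| ≤ |⟪u, w⟫| + t := (abs_sub _ _).trans (by linarith)
  rw [inner_smul_right, inner_sub_right, inner_smul_right]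
  calc _ ≤ (⟪u, w⟫ - η * ⟪u, p⟫) - |⟪u, w⟫ - η * ⟪u, p⟫| * (t ^ 2 / 2) := by
        have := mul_le_mul_of_nonneg_right hx (by positivity : (0 : ℝ) ≤ t ^ 2 / 2)
        simp only [t] at this ⊢
        linear_combination this
    _ ≤ _ := sub_abs_mul_le_mul_of_mem_Icc hfactor

end InnerProductSpace

theorem spherical_gd_one_step_general {E : Type*} [NormedAddCommGroup E] [InnerProductSpace ℝ E]
    (w g u : E) (hw : ‖w‖ = 1) (hu : ‖u‖ = 1) (η : ℝ) (hη : 0 < η) :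
    ⟪u, w⟫ - η * ⟪u, g - ⟪w, g⟫ • w⟫
        - |⟪u, w⟫| * η ^ 2 / 2 * ‖g - ⟪w, g⟫ • w‖ ^ 2
        - η ^ 3 / 2 * ‖g - ⟪w, g⟫ • w‖ ^ 3
      ≤ ⟪u, ‖w - η • (g - ⟪w, g⟫ • w)‖⁻¹ • (w - η • (g - ⟪w, g⟫ • w))⟫ :=
  inner_inv_norm_smul_sub_smul_ge hw hu (inner_sub_inner_smul_self_of_norm_eq_one hw g) hη.le

/-- One-step expansion of spherical (projected-and-normalized) gradient descent:
the alignment of the updated weight with a fixed unit direction `u` is controlled from below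
up to second- and third-order terms in the step size. -/
theorem spherical_gd_one_step {E : Type*} [NormedAddCommGroup E] [InnerProductSpace ℝ E]
    (w g u : E) (hw : ‖w‖ = 1) (hu : ‖u‖ = 1) (η : ℝ) (hη : 0 < η)
    (hne : w - η • (g - ⟪w, g⟫ • w) ≠ 0)
    (hsmall : η * ‖g - ⟪w, g⟫ • w‖ ≤ 1 / 2) :
    ⟪u, w⟫ - η * ⟪u, g - ⟪w, g⟫ • w⟫
        - |⟪u, w⟫| * η ^ 2 / 2 * ‖g - ⟪w, g⟫ • w‖ ^ 2
        - η ^ 3 / 2 * ‖g - ⟪w, g⟫ • w‖ ^ 3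
      ≤ ⟪u, ‖w - η • (g - ⟪w, g⟫ • w)‖⁻¹ • (w - η • (g - ⟪w, g⟫ • w))⟫ :=
  spherical_gd_one_step_general w g u hw hu η hη
end

section
/- Let $x_t \geq 0$ satisfy $x_{t+1} \leq x_t + B x_t^{k}$ for $k \geq 4$ and $B > 0$, with $x_0 \leq C_0 d^{-1/2}$ for constants $C_0 > 0$ and $d \geq 2$. If $T \leq \frac{1}{2} B^{-1}(k-1)^{-1}(C_0 d^{-1/2})^{-(k-1)} $, then $x_T \leq 2^{1/(k-1)} C_0 d^{-1/2}$. -/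
/-! With `n = k - 1` and `a = C₀ d^{-1/2}`, the recursion says `x_{t+1} ≤ x_t (1 + B x_t^n)`, and
Bernoulli's inequality `(1 + u)^{-n} ≥ 1 - n u` then shows that `x_t^{-n}` decreases by at most
`n B` per step. Starting from `x_0^{-n} ≥ a^{-n}`, after `T` steps it is still at least `a^{-n} / 2`,
i.e. `x_T ≤ 2^{1/n} a`. So that sequences reaching `0` are covered too, the argument is run on the
invariant `x_t^n (s - t n B) ≤ 1` instead of on `x_t^{-n}`. -/

theorem one_add_pow_mul_one_sub_mul_le_one {u : ℝ} (hu : 0 ≤ u) (n : ℕ) :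
    (1 + u) ^ n * (1 - n * u) ≤ 1 := by
  have h1u : 0 < 1 + u := by linarith
  -- Bernoulli's inequality at `-u / (1 + u)`, for which `1 + (-u / (1 + u)) = (1 + u)⁻¹`
  have hbern : 1 - n * u ≤ ((1 + u)⁻¹) ^ n := by
    calc 1 - n * u ≤ 1 + n * (-u / (1 + u)) := by
          rw [neg_div, mul_neg, ← mul_div_assoc]
          linarith [div_le_self (by positivity : (0 : ℝ) ≤ n * u) (by linarith : (1 : ℝ) ≤ 1 + u)]
      _ ≤ (1 + -u / (1 + u)) ^ n :=
          one_add_mul_le_pow (by rw [neg_div, neg_le_neg_iff, div_le_iff₀ h1u]; linarith) n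
      _ = ((1 + u)⁻¹) ^ n := by congr 1; field_simp; ring
  calc (1 + u) ^ n * (1 - n * u) ≤ (1 + u) ^ n * ((1 + u)⁻¹) ^ n := by gcongr
    _ = 1 := by rw [← mul_pow, mul_inv_cancel₀ h1u.ne', one_pow]

theorem pow_mul_sub_le_one_of_le_add_mul_pow {y z B s : ℝ} {n : ℕ} (hy : 0 ≤ y) (hz : 0 ≤ z)
    (hB : 0 ≤ B) (hzy : z ≤ y + B * y ^ (n + 1)) (hys : y ^ n * s ≤ 1) :
    z ^ n * (s - n * B) ≤ 1 := by
  rcases le_or_gt (s - n * B) 0 with hsB | hsB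
  · exact (mul_nonpos_of_nonneg_of_nonpos (by positivity) hsB).trans zero_le_one
  have hs : 0 < s := by nlinarith [mul_nonneg (Nat.cast_nonneg (α := ℝ) n) hB]
  have hyn : y ^ n ≤ s⁻¹ := by rwa [inv_eq_one_div, le_div_iff₀ hs]
  have hzn : z ^ n ≤ s⁻¹ * (1 + B * s⁻¹) ^ n := by
    calc z ^ n ≤ (y * (1 + B * y ^ n)) ^ n := by
          gcongr
          linarith [show y * (1 + B * y ^ n) = y + B * y ^ (n + 1) by ring]
      _ = y ^ n * (1 + B * y ^ n) ^ n := mul_pow ..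
      _ ≤ s⁻¹ * (1 + B * s⁻¹) ^ n := by gcongr
  calc z ^ n * (s - n * B) ≤ s⁻¹ * (1 + B * s⁻¹) ^ n * (s - n * B) := by gcongr
    _ = (1 + B * s⁻¹) ^ n * (1 - n * (B * s⁻¹)) := by field_simp
    _ ≤ 1 := one_add_pow_mul_one_sub_mul_le_one (by positivity) n

theorem pow_mul_sub_le_one_of_forall_le_add_mul_pow {x : ℕ → ℝ} (hx : ∀ t, 0 ≤ x t) {B : ℝ}
    (hB : 0 ≤ B) {n : ℕ} (hrec : ∀ t, x (t + 1) ≤ x t + B * x t ^ (n + 1)) {s : ℝ}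
    (h0 : x 0 ^ n * s ≤ 1) (t : ℕ) : x t ^ n * (s - t * n * B) ≤ 1 := by
  induction t with
  | zero => simpa using h0
  | succ t ih =>
    convert pow_mul_sub_le_one_of_le_add_mul_pow (hx t) (hx (t + 1)) hB (hrec t) ih using 2
    push_cast
    ring

theorem le_rpow_inv_mul_of_pow_le_mul_pow {x a c : ℝ} {n : ℕ} (hx : 0 ≤ x) (ha : 0 ≤ a)
    (hc : 0 ≤ c) (hn : n ≠ 0) (h : x ^ n ≤ c * a ^ n) : x ≤ c ^ (n⁻¹ : ℝ) * a := by
  rwa [← pow_le_pow_iff_left₀ hx (by positivity) hn, mul_pow, Real.rpow_inv_natCast_pow hc hn]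

/-- A nonnegative sequence with increments bounded by `B xₜᵏ` starting at scale `d^{-1/2}`
remains at scale `d^{-1/2}` for times up to order `B⁻¹ d^{(k-1)/2}`. -/
theorem hidden_signal_stays_small (x : ℕ → ℝ) (hx : ∀ t, 0 ≤ x t)
    (k : ℕ) (hk : 4 ≤ k) (B : ℝ) (hB : 0 < B)
    (hrec : ∀ t, x (t + 1) ≤ x t + B * x t ^ k)
    (C0 : ℝ) (hC0 : 0 < C0) (d : ℕ) (hd : 2 ≤ d)
    (hx0 : x 0 ≤ C0 * (d : ℝ) ^ (-(1 : ℝ) / 2))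
    (T : ℕ)
    (hT : (T : ℝ) ≤ (1 / 2) * B⁻¹ * ((k : ℝ) - 1)⁻¹ *
      ((C0 * (d : ℝ) ^ (-(1 : ℝ) / 2)) ^ (k - 1))⁻¹) :
    x T ≤ (2 : ℝ) ^ ((1 : ℝ) / ((k : ℝ) - 1)) * C0 * (d : ℝ) ^ (-(1 : ℝ) / 2) := by
  set a := C0 * (d : ℝ) ^ (-(1 : ℝ) / 2)
  have ha : 0 < a := mul_pos hC0 (Real.rpow_pos_of_pos (by positivity) _)
  obtain ⟨n, rfl⟩ : ∃ n, k = n + 1 := ⟨k - 1, by omega⟩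
  have hn : n ≠ 0 := by omega
  have hkn : ((n + 1 : ℕ) : ℝ) - 1 = n := by push_cast; ring
  rw [Nat.add_sub_cancel, hkn] at hT
  rw [hkn, mul_assoc, one_div]
  have h0 : x 0 ^ n * (a ^ n)⁻¹ ≤ 1 := mul_inv_le_one_of_le₀ (by gcongr; exact hx 0) (by positivity)
  have hTB : T * n * B ≤ (a ^ n)⁻¹ / 2 := by
    calc (T : ℝ) * n * B = T * (n * B) := mul_assoc ..
      _ ≤ 1 / 2 * B⁻¹ * (n : ℝ)⁻¹ * (a ^ n)⁻¹ * (n * B) := by gcongr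
      _ = (a ^ n)⁻¹ / 2 := by field_simp
  have hxT : x T ^ n * ((a ^ n)⁻¹ / 2) ≤ 1 :=
    le_trans (mul_le_mul_of_nonneg_left (by linarith) (pow_nonneg (hx T) n))
      (pow_mul_sub_le_one_of_forall_le_add_mul_pow hx hB.le hrec h0 T)
  refine le_rpow_inv_mul_of_pow_le_mul_pow (hx T) ha.le zero_le_two hn ?_
  rwa [show x T ^ n * ((a ^ n)⁻¹ / 2) = x T ^ n / (2 * a ^ n) by ring,
    div_le_one (by positivity)] at hxT
end
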